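/- Let B be the shifted distribution defined by B(x) = A(x) for |x| > dδ + 5ε and B(x) = A(x+4ε) otherwise, where A is the normalized G_{δ,ε} with δ < 1 and ε < δ/8. Then χ²(B, N(0,1)) ≤ C·(δ/ε)² for an absolute constant C. -/

import Mathlib

open Real

/-- Standard Gaussian density. -/
noncomputable def stdG (x : ℝ) : ℝ := (Real.sqrt (2 * Real.pi))⁻¹ * Real.exp (-x ^ 2 / 2)

open Classical in
/-- The density of the measure G_{δ,ε}. -/
noncomputable def Gde (δ ε x : ℝ) : ℝ :=
  if ∃ n : ℤ, |x - n * δ| ≤ ε then (δ / (2 * ε)) * stdG x else 0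

/-- The normalized density A. -/
noncomputable def Adens (δ ε x : ℝ) : ℝ := Gde δ ε x / (∫ y, Gde δ ε y)

/-- The shifted density B. -/
noncomputable def Bdens (δ ε : ℝ) (d : ℕ) (x : ℝ) : ℝ :=
  if (d : ℝ) * δ + 5 * ε < |x| then Adens δ ε x else Adens δ ε (x + 4 * ε)

/-! The normalized density `A` is at most `δ / (2ε‖G_{δ,ε}‖₁)` times the Gaussian density `G`,
and `‖G_{δ,ε}‖₁` is bounded below by an absolute constant: about `1/δ` of the lattice intervals,
each of mass about `δ`, lie in `[0, 1]`. By the identity `G(x + a)² / G(x) = e^{a²} G(x + 2a)`,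
both the unshifted part and the part shifted by `a = 4ε` of `B² / G` are then at most `(δ/ε)²`
times a Gaussian density, up to the factor `e^{16ε²} ≤ e`. -/

open Function MeasureTheory ProbabilityTheory Set

lemma stdG_eq_gaussianPDFReal : stdG = gaussianPDFReal 0 1 := by
  ext x; simp [stdG, gaussianPDFReal]

lemma stdG_pos (x : ℝ) : 0 < stdG x :=
  stdG_eq_gaussianPDFReal ▸ gaussianPDFReal_pos 0 1 x one_ne_zero

lemma integrable_stdG : Integrable stdG :=
  stdG_eq_gaussianPDFReal ▸ integrable_gaussianPDFReal 0 1

lemma integral_stdG : ∫ x, stdG x = 1 :=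
  stdG_eq_gaussianPDFReal ▸ integral_gaussianPDFReal_eq_one 0 one_ne_zero

lemma stdG_le_stdG_of_sq_le {x y : ℝ} (h : x ^ 2 ≤ y ^ 2) : stdG y ≤ stdG x := by
  unfold stdG; gcongr

lemma stdG_sq_div_stdG (x a : ℝ) :
    stdG (x + a) ^ 2 / stdG x = exp (a ^ 2) * stdG (x + 2 * a) := by
  rw [div_eq_iff (stdG_pos x).ne']
  have hexp : exp (-(x + a) ^ 2 / 2) ^ 2
      = exp (a ^ 2) * exp (-(x + 2 * a) ^ 2 / 2) * exp (-x ^ 2 / 2) := by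
    rw [← exp_nat_mul, ← exp_add, ← exp_add]; ring_nf
  simp only [stdG, mul_pow, hexp]
  ring

lemma sq_div_stdG_le {u c x a : ℝ} (hu : 0 ≤ u) (h : u ≤ c * stdG (x + a)) :
    u ^ 2 / stdG x ≤ c ^ 2 * exp (a ^ 2) * stdG (x + 2 * a) := by
  calc u ^ 2 / stdG x ≤ (c * stdG (x + a)) ^ 2 / stdG x := by gcongr; exact (stdG_pos x).le
    _ = c ^ 2 * exp (a ^ 2) * stdG (x + 2 * a) := by
        rw [mul_pow, mul_div_assoc, stdG_sq_div_stdG, mul_assoc]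

lemma integrable_stdG_add_mul_stdG_add (b c : ℝ) :
    Integrable fun x => stdG x + c * stdG (x + b) :=
  integrable_stdG.add ((integrable_stdG.comp_add_right b).const_mul c)

lemma integral_stdG_add_mul_stdG_add (b c : ℝ) : ∫ x, (stdG x + c * stdG (x + b)) = 1 + c := by
  rw [integral_add integrable_stdG ((integrable_stdG.comp_add_right b).const_mul c),
    integral_const_mul, integral_add_right_eq_self stdG b, integral_stdG, mul_one]

def latticeIcc (δ ε : ℝ) (n : ℤ) : Set ℝ := Icc (n * δ - ε) (n * δ + ε)

lemma Gde_eq_indicator (δ ε : ℝ) :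
    Gde δ ε = (⋃ n, latticeIcc δ ε n).indicator fun x => δ / (2 * ε) * stdG x := by
  ext x
  have hmem : (∃ n : ℤ, |x - n * δ| ≤ ε) ↔ x ∈ ⋃ n, latticeIcc δ ε n := by
    simp only [mem_iUnion, latticeIcc, mem_Icc, abs_le, sub_le_iff_le_add', neg_le_sub_iff_le_add']
  unfold Gde indicator
  split_ifs <;> tauto

lemma integrable_Gde (δ ε : ℝ) : Integrable (Gde δ ε) := by
  rw [Gde_eq_indicator]
  exact (integrable_stdG.const_mul _).indicator (.iUnion fun _ => measurableSet_Icc)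

section
variable {δ ε : ℝ} (hδ : 0 ≤ δ) (hε : 0 ≤ ε)
include hδ hε

lemma Gde_nonneg (x : ℝ) : 0 ≤ Gde δ ε x := by
  rw [Gde_eq_indicator]
  exact indicator_nonneg (fun y _ => mul_nonneg (by positivity) (stdG_pos y).le) x

lemma Gde_le (x : ℝ) : Gde δ ε x ≤ δ / (2 * ε) * stdG x := by
  rw [Gde_eq_indicator]
  exact indicator_le_self' (fun y _ => mul_nonneg (by positivity) (stdG_pos y).le) x

lemma Adens_nonneg (x : ℝ) : 0 ≤ Adens δ ε x :=
  div_nonneg (Gde_nonneg hδ hε x) (integral_nonneg (Gde_nonneg hδ hε))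

lemma Adens_le (x : ℝ) : Adens δ ε x ≤ δ / (2 * ε * ∫ y, Gde δ ε y) * stdG x := by
  calc Adens δ ε x ≤ δ / (2 * ε) * stdG x / ∫ y, Gde δ ε y :=
        div_le_div_of_nonneg_right (Gde_le hδ hε x) (integral_nonneg (Gde_nonneg hδ hε))
    _ = _ := by rw [div_mul_eq_mul_div, div_div, mul_div_right_comm]

end

lemma pairwise_disjoint_latticeIcc {δ ε : ℝ} (h : 2 * ε < δ) :
    Pairwise (Disjoint on (latticeIcc δ ε)) := by
  intro m n hmn
  wlog hlt : m < n generalizing m n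
  · exact (this hmn.symm (lt_of_le_of_ne (not_lt.1 hlt) hmn.symm)).symm
  refine Set.disjoint_left.2 fun x ⟨hm₁, hm₂⟩ ⟨hn₁, _⟩ => ?_
  have : (m : ℝ) + 1 ≤ n := by exact_mod_cast hlt
  nlinarith

lemma mul_le_setIntegral_Gde {δ ε m : ℝ} (hδ : 0 ≤ δ) (hε : 0 < ε) (n : ℤ)
    (hm : ∀ x ∈ latticeIcc δ ε n, m ≤ stdG x) :
    δ * m ≤ ∫ x in latticeIcc δ ε n, Gde δ ε x := by
  have hvol : volume.real (latticeIcc δ ε n) = 2 * ε := by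
    rw [latticeIcc, Real.volume_real_Icc_of_le (by linarith)]; ring
  have hGde : ∀ x ∈ latticeIcc δ ε n, δ / (2 * ε) * m ≤ Gde δ ε x := by
    intro x hx
    rw [Gde_eq_indicator, indicator_of_mem (mem_iUnion_of_mem n hx)]
    gcongr
    exact hm x hx
  calc δ * m = δ / (2 * ε) * m * volume.real (latticeIcc δ ε n) := by
        rw [hvol]; field_simp
    _ ≤ _ := setIntegral_ge_of_const_le_real measurableSet_Icc (by simp [latticeIcc]) hGde
        (integrable_Gde δ ε).integrableOn

lemma stdG_two_le_integral_Gde {δ ε : ℝ} (hδ : 0 < δ) (hδ1 : δ ≤ 1) (hε : 0 < ε)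
    (hεδ : 2 * ε < δ) : stdG 2 ≤ ∫ x, Gde δ ε x := by
  -- the intervals centred at `0, δ, …, Nδ ∈ [0, 1]` are disjoint, lie in `[-2, 2]`,
  -- and number `N + 1 ≥ 1/δ`
  set N := ⌊1 / δ⌋₊
  have hN : 1 ≤ (N + 1) * δ := ((div_lt_iff₀ hδ).1 (Nat.lt_floor_add_one _)).le
  have hNδ : N * δ ≤ 1 := (le_div_iff₀ hδ).1 (Nat.floor_le (by positivity))
  have hpiece : ∀ n ∈ Finset.range (N + 1),
      δ * stdG 2 ≤ ∫ x in latticeIcc δ ε n, Gde δ ε x := by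
    intro n hn
    refine mul_le_setIntegral_Gde hδ.le hε n fun x ⟨hx₁, hx₂⟩ => stdG_le_stdG_of_sq_le ?_
    have : (n : ℝ) ≤ N := by exact_mod_cast Finset.mem_range_succ_iff.1 hn
    have hnδ : n * δ ≤ 1 := (mul_le_mul_of_nonneg_right this hδ.le).trans hNδ
    push_cast at hx₁ hx₂
    exact sq_le_sq' (by nlinarith) (by linarith)
  calc stdG 2 ≤ (N + 1) * δ * stdG 2 := le_mul_of_one_le_left (stdG_pos 2).le hN
    _ = ∑ n ∈ Finset.range (N + 1), δ * stdG 2 := by simp; ring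
    _ ≤ ∑ n ∈ Finset.range (N + 1), ∫ x in latticeIcc δ ε n, Gde δ ε x :=
        Finset.sum_le_sum hpiece
    _ = ∫ x in ⋃ n ∈ Finset.range (N + 1), latticeIcc δ ε n, Gde δ ε x :=
        (integral_biUnion_finset _ (fun _ _ => measurableSet_Icc)
          ((pairwise_disjoint_latticeIcc hεδ).comp_of_injective Nat.cast_injective
            |>.set_pairwise _)
          fun _ _ => (integrable_Gde δ ε).integrableOn).symm
    _ ≤ ∫ x, Gde δ ε x :=
        setIntegral_le_integral (integrable_Gde δ ε) (.of_forall (Gde_nonneg hδ.le hε.le))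

lemma Bdens_sq_div_stdG_le {δ ε : ℝ} (hδ : 0 ≤ δ) (hε : 0 ≤ ε) (d : ℕ) (x : ℝ) :
    Bdens δ ε d x ^ 2 / stdG x ≤ (δ / (2 * ε * ∫ y, Gde δ ε y)) ^ 2 *
      (stdG x + exp (16 * ε ^ 2) * stdG (x + 8 * ε)) := by
  set c := δ / (2 * ε * ∫ y, Gde δ ε y)
  have hfar : Adens δ ε x ^ 2 / stdG x ≤ c ^ 2 * stdG x := by
    simpa using sq_div_stdG_le (a := 0) (Adens_nonneg hδ hε x) (by simpa using Adens_le hδ hε x)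
  have hnear : Adens δ ε (x + 4 * ε) ^ 2 / stdG x ≤
      c ^ 2 * exp (16 * ε ^ 2) * stdG (x + 8 * ε) := by
    convert sq_div_stdG_le (Adens_nonneg hδ hε _) (Adens_le hδ hε (x + 4 * ε)) using 4 <;> ring
  have hfar_nonneg : 0 ≤ c ^ 2 * stdG x := mul_nonneg (sq_nonneg c) (stdG_pos x).le
  have hnear_nonneg : 0 ≤ c ^ 2 * exp (16 * ε ^ 2) * stdG (x + 8 * ε) := by
    have := stdG_pos (x + 8 * ε); positivity
  unfold Bdens
  split_ifs <;> linarith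

lemma integral_Bdens_sq_div_stdG_le {δ ε : ℝ} (hδ : 0 ≤ δ) (hε : 0 ≤ ε) (d : ℕ) :
    ∫ x, Bdens δ ε d x ^ 2 / stdG x ≤
      (δ / (2 * ε * ∫ y, Gde δ ε y)) ^ 2 * (1 + exp (16 * ε ^ 2)) := by
  calc ∫ x, Bdens δ ε d x ^ 2 / stdG x
      ≤ ∫ x, (δ / (2 * ε * ∫ y, Gde δ ε y)) ^ 2 *
          (stdG x + exp (16 * ε ^ 2) * stdG (x + 8 * ε)) :=
        integral_mono_of_nonneg (.of_forall fun x => div_nonneg (sq_nonneg _) (stdG_pos x).le)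
          ((integrable_stdG_add_mul_stdG_add _ _).const_mul _)
          (.of_forall (Bdens_sq_div_stdG_le hδ hε d))
    _ = _ := by rw [integral_const_mul, integral_stdG_add_mul_stdG_add]

/-- χ²-divergence of B with respect to N(0,1) is O((δ/ε)²). -/
theorem chi_square_B_bound :
    ∃ C : ℝ, 0 < C ∧ ∀ δ ε : ℝ, ∀ d : ℕ, 2 ≤ d →
      0 < δ → δ < 1 → 0 < ε → ε < δ / 8 →
      (∫ x, (Bdens δ ε d x) ^ 2 / stdG x) - 1 ≤ C * (δ / ε) ^ 2 := by
  have hG2 := stdG_pos 2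
  refine ⟨(1 + exp 1) / (4 * stdG 2 ^ 2), by positivity, ?_⟩
  intro δ ε d _ hδ hδ1 hε hεδ
  have hI : stdG 2 ≤ ∫ x, Gde δ ε x := stdG_two_le_integral_Gde hδ hδ1.le hε (by linarith)
  have hc : (δ / (2 * ε * ∫ x, Gde δ ε x)) ^ 2 ≤ (δ / ε) ^ 2 / (4 * stdG 2 ^ 2) := by
    calc _ ≤ (δ / (2 * ε * stdG 2)) ^ 2 := by
          gcongr
          exact div_nonneg hδ.le (mul_nonneg (by positivity) (hG2.le.trans hI))
      _ = _ := by field_simp; ring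
  have hexp : exp (16 * ε ^ 2) ≤ exp 1 := exp_le_exp.2 (by nlinarith)
  calc (∫ x, Bdens δ ε d x ^ 2 / stdG x) - 1
      ≤ (δ / (2 * ε * ∫ x, Gde δ ε x)) ^ 2 * (1 + exp (16 * ε ^ 2)) := by
        linarith [integral_Bdens_sq_div_stdG_le hδ.le hε.le d]
    _ ≤ (δ / ε) ^ 2 / (4 * stdG 2 ^ 2) * (1 + exp 1) := by gcongr
    _ = _ := by ring
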